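/- Decomposition of a boundary payoff with strictly dominated transfers places continuation payoffs in the interior for high discounting: Let W ⊆ ℝ^n be a smooth compact convex set, w* ∈ ∂W with unique outward normal λ*, and x' : M → ℝ^n (M finite) with λ*·x'(m) < 0 for all m. Define w^δ(m) = w* + ((1−δ)/δ) x'(m). Then there exists δ̲ ∈ (0,1) such that w^δ(m) ∈ int W for all m ∈ M and all δ ∈ (δ̲, 1). -/

import Mathlib

open Set Filter Topology InnerProductSpace

lemma hyperplane_eq_scalar {n : ℕ} {p q : EuclideanSpace ℝ (Fin n)} {a b : ℝ}
    (hp : p ≠ 0) (hq : q ≠ 0)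
    (h : {y : EuclideanSpace ℝ (Fin n) | (inner ℝ p y : ℝ) = a} =
         {y : EuclideanSpace ℝ (Fin n) | (inner ℝ q y : ℝ) = b}) :
    ∃ s : ℝ, s ≠ 0 ∧ q = s • p := by
  have hp2 : (‖p‖ : ℝ) ^ 2 ≠ 0 := pow_ne_zero _ (norm_ne_zero_iff.mpr hp)
  set y₀ : EuclideanSpace ℝ (Fin n) := (a / ‖p‖ ^ 2) • p with hy₀def
  have hy₀ : (inner ℝ p y₀ : ℝ) = a := by
    rw [hy₀def, real_inner_smul_right, real_inner_self_eq_norm_sq]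
    field_simp
  have key : ∀ z : EuclideanSpace ℝ (Fin n), (inner ℝ p z : ℝ) = 0 → (inner ℝ q z : ℝ) = 0 := by
    intro z hz
    have h1 : y₀ ∈ {y : EuclideanSpace ℝ (Fin n) | (inner ℝ p y : ℝ) = a} := hy₀
    have h2 : y₀ + z ∈ {y : EuclideanSpace ℝ (Fin n) | (inner ℝ p y : ℝ) = a} := by
      simp only [mem_setOf_eq, inner_add_right, hy₀]
      simp [hz]
    rw [h] at h1 h2
    simp only [mem_setOf_eq, inner_add_right] at h1 h2
    linarith
  set s : ℝ := (inner ℝ p q : ℝ) / ‖p‖ ^ 2 with hsdef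
  have hr : (inner ℝ p (q - s • p) : ℝ) = 0 := by
    rw [inner_sub_right, real_inner_smul_right, real_inner_self_eq_norm_sq, hsdef]
    field_simp
    ring
  have hqr := key _ hr
  have hzero : q - s • p = 0 := by
    have h3 : (inner ℝ (q - s • p) (q - s • p) : ℝ) = 0 := by
      rw [inner_sub_left, real_inner_smul_left]
      rw [hqr, hr]
      ring
    exact inner_self_eq_zero.mp h3
  have hq' : q = s • p := by
    have := sub_eq_zero.mp hzero; exact this
  refine ⟨s, ?_, hq'⟩
  intro hs0
  apply hq
  rw [hq', hs0, zero_smul]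


/-- A supporting hyperplane of `C` at `x` is a set `H = {y | ⟪p, y⟫ = c}` with `p ≠ 0`,
containing `x`, such that `⟪p, y⟫ ≤ c` for all `y ∈ C`. -/
def IsSupportingHyperplane {n : ℕ} (C : Set (EuclideanSpace ℝ (Fin n)))
    (x : EuclideanSpace ℝ (Fin n)) (H : Set (EuclideanSpace ℝ (Fin n))) : Prop :=
  ∃ (p : EuclideanSpace ℝ (Fin n)) (c : ℝ), p ≠ 0 ∧
    H = {y | (inner ℝ p y : ℝ) = c} ∧ (inner ℝ p x : ℝ) = c ∧ ∀ y ∈ C, (inner ℝ p y : ℝ) ≤ c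

/-- A smooth convex body: nonempty, compact, convex, not a singleton, and admitting a
unique supporting hyperplane at every boundary point. -/
def SmoothConvexBody {n : ℕ} (C : Set (EuclideanSpace ℝ (Fin n))) : Prop :=
  C.Nonempty ∧ IsCompact C ∧ Convex ℝ C ∧ (∀ x, C ≠ {x}) ∧
    ∀ x ∈ frontier C, ∃! H : Set (EuclideanSpace ℝ (Fin n)), IsSupportingHyperplane C x H

lemma smooth_interior_nonempty {n : ℕ} {W : Set (EuclideanSpace ℝ (Fin n))}
    (hW : SmoothConvexBody W) : (interior W).Nonempty := by
  obtain ⟨hne, hcomp, hconv, hns, huniq⟩ := hW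
  by_contra hint
  have hint' : interior W = ∅ := not_nonempty_iff_eq_empty.mp hint
  have hspan : affineSpan ℝ W ≠ ⊤ := by
    intro htop
    exact hint (hconv.interior_nonempty_iff_affineSpan_eq_top.mpr htop)
  obtain ⟨a, ha⟩ := hne
  set V := (affineSpan ℝ W).direction with hVdef
  have hVne : V ≠ ⊤ := by
    intro hV
    exact hspan ((AffineSubspace.direction_eq_top_iff_of_nonempty
      ((affineSpan_nonempty (k := ℝ) (s := W)).mpr ⟨a, ha⟩)).mp hV)
  have hVorth : Vᗮ ≠ ⊥ := by
    intro hbot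
    exact hVne (Submodule.orthogonal_eq_bot_iff.mp hbot)
  obtain ⟨q, hqV, hq0⟩ := Submodule.exists_mem_ne_zero_of_ne_bot hVorth
  -- q is constant on W
  have hqconst : ∀ x ∈ W, (inner ℝ q x : ℝ) = (inner ℝ q a : ℝ) := by
    intro x hx
    have hmem : x - a ∈ V :=
      AffineSubspace.vsub_mem_direction (subset_affineSpan ℝ W hx) (subset_affineSpan ℝ W ha)
    have h0 : (inner ℝ (x - a) q : ℝ) = 0 := (Submodule.mem_orthogonal V q).mp hqV _ hmem
    have h0' : (inner ℝ q (x - a) : ℝ) = 0 := by rwa [real_inner_comm]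
    rw [inner_sub_right] at h0'
    linarith
  -- two distinct points give a nonzero direction r in V
  have hnsub : ¬ W ⊆ {a} := by
    intro hsub
    exact hns a (subset_antisymm hsub (by simpa using ha))
  obtain ⟨b, hb, hba⟩ : ∃ b ∈ W, b ≠ a := by
    by_contra hc
    push_neg at hc
    exact hnsub fun x hx => by simpa using hc x hx
  set r := b - a with hrdef
  have hr0 : r ≠ 0 := sub_ne_zero.mpr hba
  have hrV : r ∈ V :=
    AffineSubspace.vsub_mem_direction (subset_affineSpan ℝ W hb) (subset_affineSpan ℝ W ha)
  have hqr : (inner ℝ q r : ℝ) = 0 := by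
    have := (Submodule.mem_orthogonal V q).mp hqV _ hrV
    rwa [real_inner_comm]
  -- maximize ⟪r, ·⟫ over W
  have hcont : Continuous fun x : EuclideanSpace ℝ (Fin n) => (inner ℝ r x : ℝ) :=
    continuous_const.inner continuous_id
  obtain ⟨x₀, hx₀W, hmax⟩ := hcomp.exists_isMaxOn ⟨a, ha⟩ hcont.continuousOn
  have hmax' : ∀ x ∈ W, (inner ℝ r x : ℝ) ≤ (inner ℝ r x₀ : ℝ) := fun x hx => hmax hx
  have hfr : x₀ ∈ frontier W := by
    rw [frontier, hcomp.isClosed.closure_eq, hint']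
    simpa using hx₀W
  -- two distinct supporting hyperplanes at x₀
  have hH1 : IsSupportingHyperplane W x₀ {y | (inner ℝ q y : ℝ) = (inner ℝ q a : ℝ)} :=
    ⟨q, inner ℝ q a, hq0, rfl, hqconst x₀ hx₀W, fun y hy => (hqconst y hy).le⟩
  have hq_plus_r : q + r ≠ 0 := by
    intro h
    have h1 : (inner ℝ q (q + r) : ℝ) = 0 := by rw [h, inner_zero_right]
    rw [inner_add_right, hqr, add_zero] at h1
    exact hq0 (inner_self_eq_zero.mp h1)
  have hH2 : IsSupportingHyperplane W x₀
      {y | (inner ℝ (q + r) y : ℝ) = (inner ℝ q a : ℝ) + (inner ℝ r x₀ : ℝ)} := by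
    refine ⟨q + r, _, hq_plus_r, rfl, ?_, ?_⟩
    · rw [inner_add_left, hqconst x₀ hx₀W]
    · intro y hy
      rw [inner_add_left, hqconst y hy]
      have := hmax' y hy
      linarith
  obtain ⟨H, hHmem, hHuniq⟩ := huniq x₀ hfr
  have heq := (hHuniq _ hH1).trans (hHuniq _ hH2).symm
  obtain ⟨s, hs0, hsp⟩ := hyperplane_eq_scalar hq0 hq_plus_r heq
  -- q + r = s • q  ⟹  r = (s-1) • q  ⟹  ⟪r,r⟫ = 0
  have hrr : (inner ℝ r r : ℝ) = 0 := by
    have hreq : r = (s - 1) • q := by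
      have h4 : r = s • q - q := by rw [← hsp]; abel
      rw [h4, sub_smul, one_smul]
    calc (inner ℝ r r : ℝ) = (s - 1) * (inner ℝ q r : ℝ) := by
          nth_rewrite 1 [hreq]; rw [real_inner_smul_left]
      _ = 0 := by rw [hqr]; ring
  exact hr0 (inner_self_eq_zero.mp hrr)

lemma smooth_step_interior {n : ℕ} {W : Set (EuclideanSpace ℝ (Fin n))}
    (hW : SmoothConvexBody W)
    {wstar : EuclideanSpace ℝ (Fin n)} (hwstar : wstar ∈ frontier W)
    {lam : EuclideanSpace ℝ (Fin n)} (hlam : lam ≠ 0)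
    (hsupp : ∀ x ∈ W, (inner ℝ lam x : ℝ) ≤ (inner ℝ lam wstar : ℝ))
    {y : EuclideanSpace ℝ (Fin n)} (hy : (inner ℝ lam y : ℝ) < 0) :
    ∃ t0 : ℝ, 0 < t0 ∧ wstar + t0 • y ∈ interior W := by
  obtain ⟨z, hz⟩ := smooth_interior_nonempty hW
  obtain ⟨hne, hcomp, hconv, hns, huniq⟩ := hW
  have hwW : wstar ∈ W := by
    have := frontier_subset_closure hwstar
    rwa [hcomp.isClosed.closure_eq] at this
  have hzW : z ∈ W := interior_subset hz
  -- strict inequality at interior point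
  have hzs : (inner ℝ lam z : ℝ) < (inner ℝ lam wstar : ℝ) := by
    obtain ⟨ε, hε, hball⟩ := Metric.isOpen_iff.mp isOpen_interior z hz
    set z' := z + (ε / (2 * ‖lam‖)) • lam with hz'def
    have hlamn : (0:ℝ) < ‖lam‖ := norm_pos_iff.mpr hlam
    have hz'W : z' ∈ W := by
      apply interior_subset
      apply hball
      rw [Metric.mem_ball, dist_eq_norm, hz'def]
      have : z + (ε / (2 * ‖lam‖)) • lam - z = (ε / (2 * ‖lam‖)) • lam := by abel
      rw [this, norm_smul]
      rw [Real.norm_eq_abs, abs_of_pos (by positivity)]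
      have heq2 : ε / (2 * ‖lam‖) * ‖lam‖ = ε / 2 := by
        field_simp
      rw [heq2]
      linarith
    have h5 := hsupp z' hz'W
    rw [hz'def, inner_add_right, real_inner_smul_right, real_inner_self_eq_norm_sq] at h5
    have hpos : 0 < ε / (2 * ‖lam‖) * ‖lam‖ ^ 2 := by positivity
    linarith
  -- suppose no step enters the interior
  by_contra hcon
  push_neg at hcon
  set t : ℕ → ℝ := fun k => 1 / (k + 1) with htdef
  have htpos : ∀ k : ℕ, 0 < t k := fun k => by positivity
  have hxk : ∀ k : ℕ, wstar + t k • y ∉ interior W := fun k => hcon (t k) (htpos k)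
  -- separating unit vectors
  have hsep : ∀ k : ℕ, ∃ u : EuclideanSpace ℝ (Fin n), ‖u‖ = 1 ∧
      ∀ a ∈ W, (inner ℝ u a : ℝ) ≤ (inner ℝ u (wstar + t k • y) : ℝ) := by
    intro k
    obtain ⟨f, hf⟩ := geometric_hahn_banach_open_point hconv.interior isOpen_interior (hxk k)
    have hf0 : f ≠ 0 := by
      intro h0
      have := hf z hz
      rw [h0] at this
      simp at this
    set p := (toDual ℝ (EuclideanSpace ℝ (Fin n))).symm f with hpdef
    have hpinner : ∀ x, (inner ℝ p x : ℝ) = f x := fun x => toDual_symm_apply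
    have hp0 : p ≠ 0 := by
      intro h0
      apply hf0
      have := congrArg (toDual ℝ (EuclideanSpace ℝ (Fin n))) (h0 : p = 0)
      rw [hpdef, LinearIsometryEquiv.apply_symm_apply, map_zero] at this
      exact this
    have hfle : ∀ a ∈ W, f a ≤ f (wstar + t k • y) := by
      intro a ha
      have hacl : a ∈ closure (interior W) := by
        have hseq : Filter.Tendsto (fun j : ℕ => a + (1 / (j + 1) : ℝ) • (z - a))
            atTop (𝓝 a) := by
          have h1 : Filter.Tendsto (fun j : ℕ => (1 / (j + 1) : ℝ)) atTop (𝓝 0) :=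
            tendsto_one_div_add_atTop_nhds_zero_nat
          have h2 := h1.smul_const (z - a)
          rw [zero_smul] at h2
          have h3 := (tendsto_const_nhds (x := a) (f := atTop (α := ℕ))).add h2
          rwa [add_zero] at h3
        refine mem_closure_of_tendsto hseq (Filter.Eventually.of_forall fun j => ?_)
        have hj1 : (0:ℝ) < 1 / (j + 1) := by positivity
        have hj2 : (1 / (j + 1) : ℝ) ≤ 1 := by
          rw [div_le_one (by positivity)]
          norm_num
        exact hconv.add_smul_sub_mem_interior ha hz ⟨hj1, hj2⟩
      have hsub : closure (interior W) ⊆ {b | f b ≤ f (wstar + t k • y)} :=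
        closure_minimal (fun b hb => (hf b hb).le)
          (isClosed_le f.continuous continuous_const)
      exact hsub hacl
    refine ⟨‖p‖⁻¹ • p, ?_, ?_⟩
    · rw [norm_smul, norm_inv, norm_norm, inv_mul_cancel₀ (norm_ne_zero_iff.mpr hp0)]
    · intro a ha
      rw [real_inner_smul_left, real_inner_smul_left, hpinner, hpinner]
      exact mul_le_mul_of_nonneg_left (hfle a ha) (by positivity)
  choose u hu1 hu2 using hsep
  have humem : ∀ k, u k ∈ Metric.sphere (0 : EuclideanSpace ℝ (Fin n)) 1 := by
    intro k
    rw [Metric.mem_sphere, dist_zero_right]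
    exact hu1 k
  obtain ⟨p, hpmem, φ, hφ, hφlim⟩ :=
    (isCompact_sphere (0 : EuclideanSpace ℝ (Fin n)) 1).tendsto_subseq humem
  have hp1 : ‖p‖ = 1 := by
    rw [Metric.mem_sphere, dist_zero_right] at hpmem
    exact hpmem
  have hp0 : p ≠ 0 := fun h0 => by rw [h0, norm_zero] at hp1; norm_num at hp1
  have htlim : Filter.Tendsto (fun k => t (φ k)) atTop (𝓝 0) := by
    have h1 : Filter.Tendsto t atTop (𝓝 0) := tendsto_one_div_add_atTop_nhds_zero_nat
    exact h1.comp hφ.tendsto_atTop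
  -- limit support inequality
  have hpsupp : ∀ a ∈ W, (inner ℝ p a : ℝ) ≤ (inner ℝ p wstar : ℝ) := by
    intro a ha
    have lhs : Filter.Tendsto (fun k => (inner ℝ (u (φ k)) a : ℝ)) atTop (𝓝 (inner ℝ p a : ℝ)) :=
      hφlim.inner tendsto_const_nhds
    have hxlim : Filter.Tendsto (fun k => wstar + t (φ k) • y) atTop (𝓝 wstar) := by
      have h2 := htlim.smul_const y
      rw [zero_smul] at h2
      have h3 := (tendsto_const_nhds (x := wstar) (f := atTop (α := ℕ))).add h2
      rwa [add_zero] at h3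
    have rhs : Filter.Tendsto (fun k => (inner ℝ (u (φ k)) (wstar + t (φ k) • y) : ℝ))
        atTop (𝓝 (inner ℝ p wstar : ℝ)) := hφlim.inner hxlim
    exact le_of_tendsto_of_tendsto' lhs rhs fun k => hu2 (φ k) a ha
  -- nonnegativity in direction y
  have hpy : 0 ≤ (inner ℝ p y : ℝ) := by
    have hk : ∀ k : ℕ, 0 ≤ (inner ℝ (u (φ k)) y : ℝ) := by
      intro k
      have h6 := hu2 (φ k) wstar hwW
      rw [inner_add_right, real_inner_smul_right] at h6
      nlinarith [htpos (φ k)]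
    have hlim : Filter.Tendsto (fun k => (inner ℝ (u (φ k)) y : ℝ)) atTop (𝓝 (inner ℝ p y : ℝ)) :=
      hφlim.inner tendsto_const_nhds
    exact ge_of_tendsto hlim (Filter.Eventually.of_forall hk)
  -- uniqueness of the supporting hyperplane
  have hH1 : IsSupportingHyperplane W wstar
      {v | (inner ℝ lam v : ℝ) = (inner ℝ lam wstar : ℝ)} :=
    ⟨lam, _, hlam, rfl, rfl, hsupp⟩
  have hH2 : IsSupportingHyperplane W wstar
      {v | (inner ℝ p v : ℝ) = (inner ℝ p wstar : ℝ)} :=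
    ⟨p, _, hp0, rfl, rfl, hpsupp⟩
  obtain ⟨H, hHmem, hHuniq⟩ := huniq wstar hwstar
  have heq := (hHuniq _ hH1).trans (hHuniq _ hH2).symm
  obtain ⟨s, hs0, hsp⟩ := hyperplane_eq_scalar hlam hp0 heq
  have hpy' : 0 ≤ s * (inner ℝ lam y : ℝ) := by
    rw [hsp, real_inner_smul_left] at hpy
    exact hpy
  have hsneg : s < 0 := by
    rcases lt_trichotomy s 0 with h | h | h
    · exact h
    · exact absurd h hs0
    · nlinarith
  have h2 := hpsupp z hzW
  rw [hsp, real_inner_smul_left, real_inner_smul_left] at h2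
  nlinarith

/-- If `w*` is a boundary point of a smooth compact convex set `W` with outward normal
`λ*`, and the transfers `x'` satisfy `λ*·x'(m) < 0` for all `m`, then the continuation
payoffs `w^δ(m) = w* + ((1-δ)/δ) x'(m)` lie in the interior of `W` for all `δ` close
enough to 1. -/
theorem continuation_in_interior {n : ℕ} {M : Type*} [Fintype M]
    (W : Set (EuclideanSpace ℝ (Fin n))) (hW : SmoothConvexBody W)
    (wstar : EuclideanSpace ℝ (Fin n)) (hwstar : wstar ∈ frontier W)
    (lam : EuclideanSpace ℝ (Fin n)) (hlam : lam ≠ 0)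
    (hsupp : ∀ x ∈ W, (inner ℝ lam x : ℝ) ≤ (inner ℝ lam wstar : ℝ))
    (x' : M → EuclideanSpace ℝ (Fin n)) (hx' : ∀ m, (inner ℝ lam (x' m) : ℝ) < 0) :
    ∃ δlow ∈ Set.Ioo (0:ℝ) 1, ∀ δ ∈ Set.Ioo δlow 1, ∀ m : M,
      wstar + ((1 - δ)/δ) • x' m ∈ interior W := by
  have hconv : Convex ℝ W := hW.2.2.1
  have hwW : wstar ∈ W := by
    have := frontier_subset_closure hwstar
    rwa [hW.2.1.isClosed.closure_eq] at this
  have key : ∀ m : M, ∃ t0 : ℝ, 0 < t0 ∧ wstar + t0 • x' m ∈ interior W :=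
    fun m => smooth_step_interior hW hwstar hlam hsupp (hx' m)
  choose t ht0 htm using key
  by_cases hM : Nonempty M
  · haveI := hM
    set τ := Finset.univ.inf' Finset.univ_nonempty t with hτdef
    have hτpos : 0 < τ := by
      rw [hτdef, Finset.lt_inf'_iff]
      exact fun m _ => ht0 m
    have hτle : ∀ m : M, τ ≤ t m := fun m => Finset.inf'_le _ (Finset.mem_univ m)
    refine ⟨max (1/2) (1/(1+τ)), ⟨lt_max_of_lt_left (by norm_num), ?_⟩, ?_⟩
    · apply max_lt (by norm_num)
      rw [div_lt_one (by linarith)]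
      linarith
    · intro δ hδ m
      obtain ⟨hδl, hδu⟩ := hδ
      have hδhalf : (1:ℝ)/2 < δ := lt_of_le_of_lt (le_max_left _ _) hδl
      have hδτ : 1/(1+τ) < δ := lt_of_le_of_lt (le_max_right _ _) hδl
      have hδ0 : (0:ℝ) < δ := by linarith
      set s := (1 - δ)/δ with hsdef
      have hs_pos : 0 < s := div_pos (by linarith) hδ0
      have hs_lt : s < τ := by
        rw [hsdef, div_lt_iff₀ hδ0]
        rw [div_lt_iff₀ (by linarith : (0:ℝ) < 1 + τ)] at hδτ
        nlinarith
      have hratio : s / t m ∈ Set.Ioc (0:ℝ) 1 := by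
        constructor
        · exact div_pos hs_pos (ht0 m)
        · rw [div_le_one (ht0 m)]
          exact le_of_lt (lt_of_lt_of_le hs_lt (hτle m))
      have hstep := hconv.add_smul_mem_interior hwW (htm m) hratio
      have hrw : (s / t m) • t m • x' m = s • x' m := by
        rw [smul_smul, div_mul_cancel₀ _ (ne_of_gt (ht0 m))]
      rwa [hrw] at hstep
  · exact ⟨1/2, ⟨by norm_num, by norm_num⟩, fun δ _ m => absurd ⟨m⟩ hM⟩
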